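/- arXiv:2308.09043 — 3 statements merged into one kernel-verified Lean document; each statement's English description precedes it below -/
import Mathlib

section
/- For all real numbers a, b ≥ 0, the inequality (1/4)(e^a − e^{−a})(1 + e^{min(b, ln 3)}) + e^{−a} ≤ e^{2(ab + a²)} holds. -/
open Real

lemma sinh_le_mul_cosh (a : ℝ) (ha : 0 ≤ a) : Real.sinh a ≤ a * Real.cosh a := by
  have hmono : MonotoneOn (fun x : ℝ => x * Real.cosh x - Real.sinh x) (Set.Ici 0) := by
    have hd : ∀ x : ℝ, HasDerivAt (fun x : ℝ => x * Real.cosh x - Real.sinh x)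
        (1 * Real.cosh x + x * Real.sinh x - Real.cosh x) x := fun x =>
      ((hasDerivAt_id x).mul (Real.hasDerivAt_cosh x)).sub (Real.hasDerivAt_sinh x)
    apply monotoneOn_of_deriv_nonneg (convex_Ici 0)
    · exact ((continuous_id.mul Real.continuous_cosh).sub Real.continuous_sinh).continuousOn
    · intro x _
      exact ((hd x).differentiableAt).differentiableWithinAt
    · intro x hx
      rw [(hd x).deriv]
      have hx0 : 0 ≤ x := le_of_lt (by simpa using hx)
      have : 0 ≤ Real.sinh x := Real.sinh_nonneg_iff.mpr hx0
      nlinarith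
  have := hmono (Set.self_mem_Ici) (Set.mem_Ici.mpr ha) ha
  simpa using this

theorem stmt_0 (a b : ℝ) (ha : 0 ≤ a) (hb : 0 ≤ b) :
    (1/4) * (exp a - exp (-a)) * (1 + exp (min b (Real.log 3))) + exp (-a)
      ≤ exp (2 * (a * b + a ^ 2)) := by
  set m := min b (Real.log 3) with hm
  have hlog3 : (1:ℝ) ≤ Real.log 3 := by
    rw [Real.le_log_iff_exp_le (by norm_num)]
    exact le_of_lt (by calc Real.exp 1 < 2.7182818286 := Real.exp_one_lt_d9
      _ ≤ 3 := by norm_num)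
  have hm0 : 0 ≤ m := le_min hb (le_trans zero_le_one hlog3)
  set μ := (Real.exp m - 1) / 2 with hμ
  have hμ0 : 0 ≤ μ := by
    have := Real.one_le_exp hm0
    simp only [hμ]; linarith
  -- key: μ * a ≤ 2*a*b + (3/2)*a^2
  have hkey : μ * a ≤ 2 * (a * b) + (3/2) * a ^ 2 := by
    rcases le_total b (Real.log 3) with hble | hble
    · have hmb : m = b := min_eq_left hble
      have h3 : Real.exp b ≤ 3 := by
        rw [← Real.exp_log (show (0:ℝ) < 3 by norm_num)]
        exact Real.exp_le_exp.mpr hble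
      -- exp b ≤ 1 + 3*b
      have heb : Real.exp b ≤ 1 + 3 * b := by
        have h1 : 1 - b ≤ Real.exp (-b) := by
          have := Real.add_one_le_exp (-b); linarith
        have h2 : Real.exp (-b) * Real.exp b = 1 := by
          rw [← Real.exp_add]; simp
        nlinarith [Real.exp_pos b]
      have hμle : μ ≤ 2 * b := by
        rw [hμ, hmb]; linarith
      nlinarith
    · have hmb : m = Real.log 3 := min_eq_right hble
      have hμ1 : μ ≤ 1 := by
        rw [hμ, hmb, Real.exp_log (by norm_num : (0:ℝ) < 3)]; norm_num
      have hb1 : 1 ≤ 2 * b := by linarith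
      nlinarith
  -- rewrite LHS as cosh a + μ * sinh a
  have hLHS : (1/4) * (exp a - exp (-a)) * (1 + exp m) + exp (-a)
      = Real.cosh a + μ * Real.sinh a := by
    rw [Real.cosh_eq, Real.sinh_eq, hμ]; ring
  rw [hLHS]
  have hsinh : Real.sinh a ≤ a * Real.cosh a := sinh_le_mul_cosh a ha
  have hcosh_pos : 0 < Real.cosh a := Real.cosh_pos (x := a)
  have h1 : Real.cosh a + μ * Real.sinh a ≤ (1 + μ * a) * Real.cosh a := by
    nlinarith
  have h2 : (1 + μ * a) * Real.cosh a ≤ Real.exp (μ * a) * Real.exp (a ^ 2 / 2) := by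
    have ha1 : 1 + μ * a ≤ Real.exp (μ * a) := by
      have := Real.add_one_le_exp (μ * a); linarith
    have hc : Real.cosh a ≤ Real.exp (a ^ 2 / 2) := Real.cosh_le_exp_half_sq a
    have h0 : 0 ≤ 1 + μ * a := by positivity
    exact mul_le_mul ha1 hc (le_of_lt hcosh_pos) (Real.exp_pos _).le
  calc Real.cosh a + μ * Real.sinh a ≤ Real.exp (μ * a) * Real.exp (a ^ 2 / 2) := h1.trans h2
    _ = Real.exp (μ * a + a ^ 2 / 2) := (Real.exp_add _ _).symm
    _ ≤ Real.exp (2 * (a * b + a ^ 2)) := Real.exp_le_exp.mpr (by nlinarith)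
end

section
/- Let P and Q be probability measures on a measurable space with Q ≪ P allowing the χ²-divergence χ²(P‖Q) = ∫ (dP/dQ)² dQ − 1 to be finite. Then 1 − TV(P,Q) ≥ (1/2)·exp(−KL(P‖Q)) ≥ (1/2)·1/(1 + χ²(P‖Q)), where TV is total variation distance and KL the Kullback–Leibler divergence. -/
open MeasureTheory Real

/-- Total variation distance between two measures, as the supremum over measurable
sets of the absolute difference of their (real-valued) masses. -/
noncomputable def tvDist {Ω : Type*} [MeasurableSpace Ω] (P Q : Measure Ω) : ℝ :=
  ⨆ A : {A : Set Ω // MeasurableSet A}, |(P A.1).toReal - (Q A.1).toReal|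

/-- Kullback–Leibler divergence KL(P‖Q) = ∫ log(dP/dQ) dP. -/
noncomputable def klDiv' {Ω : Type*} [MeasurableSpace Ω] (P Q : Measure Ω) : ℝ :=
  ∫ x, Real.log ((P.rnDeriv Q x).toReal) ∂P

/-- χ²-divergence χ²(P‖Q) = ∫ (dP/dQ)² dQ − 1. -/
noncomputable def chi2Div {Ω : Type*} [MeasurableSpace Ω] (P Q : Measure Ω) : ℝ :=
  (∫ x, ((P.rnDeriv Q x).toReal) ^ 2 ∂Q) - 1


/-! Write `g = dP/dQ`. For every event `A`, `|P A - Q A| ≤ ∫ (g - 1)⁺ dQ = 1 - ∫ min(g, 1) dQ`.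
Cauchy–Schwarz applied to `√g = √(min(g, 1) · max(g, 1))` gives Le Cam's bound
`(∫ √g dQ)² ≤ 2 ∫ min(g, 1) dQ`. Jensen's inequality for `exp` under `P` gives
`exp(-KL/2) ≤ ∫ g^(-1/2) dP = ∫ √g dQ` and `exp(KL) ≤ ∫ g dP = ∫ g² dQ = 1 + χ²`. -/

lemma Real.sqrt_mul_le_half_add {x y : ℝ} (hx : 0 ≤ x) (hy : 0 ≤ y) :
    √(x * y) ≤ (x + y) / 2 :=
  Real.sqrt_le_iff.mpr ⟨by positivity, by nlinarith [sq_nonneg (x - y)]⟩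

namespace MeasureTheory

variable {α : Type*} [MeasurableSpace α] {μ : Measure α} {f u v : α → ℝ}

lemma abs_setIntegral_le_integral_max_zero (hf : Integrable f μ) (hf0 : ∫ x, f x ∂μ = 0)
    (s : Set α) : |∫ x in s, f x ∂μ| ≤ ∫ x, max (f x) 0 ∂μ := by
  have hmax_neg : ∫ x, max (-f x) 0 ∂μ = ∫ x, max (f x) 0 ∂μ := by
    have h : ∀ x, max (-f x) 0 = max (f x) 0 - f x := fun x => by
      rcases le_total (f x) 0 with h | h <;> simp [h]
    simp only [h, integral_sub hf.pos_part hf, hf0, sub_zero]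
  have hle {g : α → ℝ} (hg : Integrable g μ) : ∫ x in s, g x ∂μ ≤ ∫ x, max (g x) 0 ∂μ :=
    (setIntegral_mono hg.integrableOn hg.pos_part.integrableOn fun x => le_max_left _ _).trans
      (setIntegral_le_integral hg.pos_part (.of_forall fun x => le_max_right _ _))
  rw [abs_le, neg_le, ← integral_neg]
  exact ⟨hmax_neg ▸ hle hf.neg, hle hf⟩

lemma Integrable.sqrt_mul (hu : Integrable u μ) (hv : Integrable v μ) (hu0 : 0 ≤ u)
    (hv0 : 0 ≤ v) : Integrable (fun x => √(u x * v x)) μ :=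
  ((hu.add hv).div_const 2).mono'
    (Real.continuous_sqrt.comp_aestronglyMeasurable
      (hu.aestronglyMeasurable.mul hv.aestronglyMeasurable))
    (.of_forall fun x => by
      rw [Real.norm_of_nonneg (Real.sqrt_nonneg _)]
      exact Real.sqrt_mul_le_half_add (hu0 x) (hv0 x))

lemma integral_sqrt_mul_sq_le (hu : Integrable u μ) (hv : Integrable v μ) (hu0 : 0 ≤ u)
    (hv0 : 0 ≤ v) : (∫ x, √(u x * v x) ∂μ) ^ 2 ≤ (∫ x, u x ∂μ) * ∫ x, v x ∂μ := by
  have huv := hu.sqrt_mul hv hu0 hv0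
  -- `∫ (t √u - √v)² ≥ 0` for every `t`, so the discriminant of this quadratic in `t` is `≤ 0`.
  have hquad (t : ℝ) : 0 ≤ (∫ x, u x ∂μ) * (t * t) + (-2 * ∫ x, √(u x * v x) ∂μ) * t
      + ∫ x, v x ∂μ := by
    have hpt (x : α) : 0 ≤ t ^ 2 * u x - 2 * t * √(u x * v x) + v x := by
      rw [Real.sqrt_mul (hu0 x)]
      nlinarith [sq_nonneg (t * √(u x) - √(v x)), Real.sq_sqrt (hu0 x), Real.sq_sqrt (hv0 x)]
    have : 0 ≤ ∫ x, (t ^ 2 * u x - 2 * t * √(u x * v x) + v x) ∂μ := integral_nonneg hpt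
    have hint : Integrable (fun x => t ^ 2 * u x - 2 * t * √(u x * v x)) μ :=
      (hu.const_mul _).sub (huv.const_mul _)
    rw [integral_add hint hv,
      integral_sub (hu.const_mul _) (huv.const_mul _), integral_const_mul,
      integral_const_mul] at this
    linarith
  have := discrim_le_zero hquad
  rw [discrim] at this
  linarith

lemma exp_integral_le_integral_exp [IsProbabilityMeasure μ] (hf : Integrable f μ)
    (hexp : Integrable (fun x => exp (f x)) μ) : exp (∫ x, f x ∂μ) ≤ ∫ x, exp (f x) ∂μ :=
  convexOn_exp.map_integral_le continuous_exp.continuousOn isClosed_univ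
    (.of_forall fun _ => Set.mem_univ _) hf hexp

end MeasureTheory

/-- `∫ min(dP, dQ)`, written through the density `dP/dQ`. -/
noncomputable def minAffinity {Ω : Type*} [MeasurableSpace Ω] (P Q : Measure Ω) : ℝ :=
  ∫ x, min (P.rnDeriv Q x).toReal 1 ∂Q

/-- `∫ √(dP dQ)`, written through the density `dP/dQ`. -/
noncomputable def bhattacharyyaCoeff {Ω : Type*} [MeasurableSpace Ω] (P Q : Measure Ω) : ℝ :=
  ∫ x, √(P.rnDeriv Q x).toReal ∂Q

section Divergences

variable {Ω : Type*} [MeasurableSpace Ω] {P Q : Measure Ω}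

lemma ae_toReal_rnDeriv_pos [SigmaFinite P] [SigmaFinite Q] (hPQ : P ≪ Q) :
    ∀ᵐ x ∂P, 0 < (P.rnDeriv Q x).toReal := by
  filter_upwards [Measure.rnDeriv_pos hPQ, hPQ.ae_le (Measure.rnDeriv_lt_top P Q)] with x h0 htop
  exact ENNReal.toReal_pos h0.ne' htop.ne

variable [IsProbabilityMeasure P]

lemma integral_toReal_rnDeriv_eq_one [SigmaFinite Q] (hPQ : P ≪ Q) :
    ∫ x, (P.rnDeriv Q x).toReal ∂Q = 1 := by
  simp [Measure.integral_toReal_rnDeriv hPQ]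

lemma tvDist_le_one_sub_minAffinity [IsProbabilityMeasure Q] (hPQ : P ≪ Q) :
    tvDist P Q ≤ 1 - minAffinity P Q := by
  set g : Ω → ℝ := fun x => (P.rnDeriv Q x).toReal
  have hg : Integrable g Q := Measure.integrable_toReal_rnDeriv
  have hf : Integrable (fun x => g x - 1) Q := hg.sub (integrable_const 1)
  have hf0 : ∫ x, (g x - 1) ∂Q = 0 := by
    simp [integral_sub hg (integrable_const 1), g, integral_toReal_rnDeriv_eq_one hPQ]
  have hpos : ∫ x, max (g x - 1) 0 ∂Q = 1 - minAffinity P Q := by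
    have h (x : Ω) : max (g x - 1) 0 = g x - min (g x) 1 := by
      rcases le_total (g x) 1 with h | h <;> simp [h]
    simp only [h]
    have hmin : Integrable (fun x => min (g x) 1) Q := hg.inf (integrable_const 1)
    rw [integral_sub hg hmin, integral_toReal_rnDeriv_eq_one hPQ]
    rfl
  have : Nonempty {A : Set Ω // MeasurableSet A} := ⟨⟨∅, .empty⟩⟩
  refine ciSup_le fun A => ?_
  have hA : (P A.1).toReal - (Q A.1).toReal = ∫ x in A.1, (g x - 1) ∂Q := by
    rw [integral_sub hg.integrableOn (integrable_const 1).integrableOn,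
      Measure.setIntegral_toReal_rnDeriv hPQ]
    simp [Measure.real]
  rw [hA, ← hpos]
  exact abs_setIntegral_le_integral_max_zero hf hf0 A.1

lemma bhattacharyyaCoeff_sq_le_two_mul_minAffinity [IsProbabilityMeasure Q] (hPQ : P ≪ Q) :
    bhattacharyyaCoeff P Q ^ 2 ≤ 2 * minAffinity P Q := by
  set g : Ω → ℝ := fun x => (P.rnDeriv Q x).toReal
  have hg : Integrable g Q := Measure.integrable_toReal_rnDeriv
  have hmin : Integrable (fun x => min (g x) 1) Q := hg.inf (integrable_const 1)
  have hmax : Integrable (fun x => max (g x) 1) Q := hg.sup (integrable_const 1)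
  have hsum : minAffinity P Q + ∫ x, max (g x) 1 ∂Q = 2 := by
    rw [minAffinity, ← integral_add hmin hmax]
    simp only [min_add_max]
    norm_num [integral_add hg (integrable_const 1), g, integral_toReal_rnDeriv_eq_one hPQ]
  have hmin_nonneg : 0 ≤ minAffinity P Q :=
    integral_nonneg fun x => le_min ENNReal.toReal_nonneg zero_le_one
  have hCS : bhattacharyyaCoeff P Q ^ 2 ≤ minAffinity P Q * ∫ x, max (g x) 1 ∂Q := by
    have h := integral_sqrt_mul_sq_le hmin hmax
      (fun x => le_min ENNReal.toReal_nonneg zero_le_one)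
      (fun x => zero_le_one.trans (le_max_right _ _))
    simp only [min_mul_max, mul_one] at h
    exact h
  nlinarith

lemma exp_neg_half_klDiv_le_bhattacharyyaCoeff [IsFiniteMeasure Q] (hPQ : P ≪ Q)
    (hkl : Integrable (fun x => log (P.rnDeriv Q x).toReal) P) :
    exp (-klDiv' P Q / 2) ≤ bhattacharyyaCoeff P Q := by
  set g : Ω → ℝ := fun x => (P.rnDeriv Q x).toReal
  have hg0 (x : Ω) : 0 ≤ g x := ENNReal.toReal_nonneg
  have hexp : (fun x => exp (-(1 / 2) * log (g x))) =ᵐ[P] fun x => (√(g x))⁻¹ := by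
    filter_upwards [ae_toReal_rnDeriv_pos hPQ] with x hx
    rw [show -(1 / 2) * log (g x) = -log √(g x) by rw [Real.log_sqrt (hg0 x)]; ring,
      exp_neg, exp_log (Real.sqrt_pos.mpr hx)]
  have hmul (x : Ω) : g x * (√(g x))⁻¹ = √(g x) := Real.div_sqrt
  have hsqrt : Integrable (fun x => √(g x)) Q := by
    simpa using Measure.integrable_toReal_rnDeriv.sqrt_mul (integrable_const 1)
      hg0 fun _ => zero_le_one
  have hinv : Integrable (fun x => (√(g x))⁻¹) P :=
    (integrable_toReal_rnDeriv_mul_iff hPQ).mp (hsqrt.congr (.of_forall fun x => (hmul x).symm))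
  calc exp (-klDiv' P Q / 2) = exp (∫ x, -(1 / 2) * log (g x) ∂P) := by
        change exp (-(∫ x, log (g x) ∂P) / 2) = _
        rw [integral_const_mul]
        ring_nf
    _ ≤ ∫ x, exp (-(1 / 2) * log (g x)) ∂P :=
        exp_integral_le_integral_exp (hkl.const_mul _) (hinv.congr hexp.symm)
    _ = ∫ x, (√(g x))⁻¹ ∂P := integral_congr_ae hexp
    _ = bhattacharyyaCoeff P Q := by
        rw [← integral_toReal_rnDeriv_mul hPQ]
        exact integral_congr_ae (.of_forall hmul)

lemma exp_klDiv_le_one_add_chi2Div [SigmaFinite Q] (hPQ : P ≪ Q)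
    (hchi : Integrable (fun x => (P.rnDeriv Q x).toReal ^ 2) Q)
    (hkl : Integrable (fun x => log (P.rnDeriv Q x).toReal) P) :
    exp (klDiv' P Q) ≤ 1 + chi2Div P Q := by
  set g : Ω → ℝ := fun x => (P.rnDeriv Q x).toReal
  have hexp : (fun x => exp (log (g x))) =ᵐ[P] g := by
    filter_upwards [ae_toReal_rnDeriv_pos hPQ] with x hx
    exact exp_log hx
  have hg : Integrable g P :=
    (integrable_toReal_rnDeriv_mul_iff hPQ).mp (by simpa only [sq] using hchi)
  calc exp (klDiv' P Q) ≤ ∫ x, exp (log (g x)) ∂P :=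
        exp_integral_le_integral_exp hkl (hg.congr hexp.symm)
    _ = ∫ x, g x ∂P := integral_congr_ae hexp
    _ = ∫ x, g x ^ 2 ∂Q := by
        simp only [← integral_toReal_rnDeriv_mul hPQ, sq]
        rfl
    _ = 1 + chi2Div P Q := by
        rw [chi2Div]
        ring

end Divergences

theorem stmt_6 {Ω : Type*} [MeasurableSpace Ω] (P Q : Measure Ω)
    [IsProbabilityMeasure P] [IsProbabilityMeasure Q]
    (hPQ : P ≪ Q)
    (hchi : Integrable (fun x => ((P.rnDeriv Q x).toReal) ^ 2) Q)
    (hkl : Integrable (fun x => Real.log ((P.rnDeriv Q x).toReal)) P) :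
    (1/2) * Real.exp (-(klDiv' P Q)) ≤ 1 - tvDist P Q ∧
    (1/2) * (1 / (1 + chi2Div P Q)) ≤ (1/2) * Real.exp (-(klDiv' P Q)) := by
  have hTV := tvDist_le_one_sub_minAffinity hPQ
  have hLeCam := bhattacharyyaCoeff_sq_le_two_mul_minAffinity hPQ
  have hBC := pow_le_pow_left₀ (exp_pos _).le (exp_neg_half_klDiv_le_bhattacharyyaCoeff hPQ hkl) 2
  have hχ := exp_klDiv_le_one_add_chi2Div hPQ hchi hkl
  rw [← exp_nat_mul, show ((2 : ℕ) : ℝ) * (-klDiv' P Q / 2) = -klDiv' P Q by ring] at hBC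
  constructor
  · linarith
  · rw [exp_neg, ← one_div]
    gcongr
end

section
/- Let μ be a probability measure, (e_ℓ) an orthonormal basis of L²(μ), λ ∈ ℓ², and K(x,y) = Σ_ℓ λ_ℓ e_ℓ(x)e_ℓ(y) converging in L²(μ⊗μ). If f and g are probability densities with respect to μ bounded by C, then 0 ≤ E[K(X,Y)²] ≤ C²·Σ_ℓ λ_ℓ², where X ∼ f dμ and Y ∼ g dμ are independent. -/
/-!
Expanding the square of a partial sum `S_n(x,y) = Σ_{ℓ<n} λ_ℓ e_ℓ(x) e_ℓ(y)` and integrating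
term by term, orthonormality of `(e_ℓ)` makes every cross term vanish, so
`∫∫ S_n² dμ⊗μ = Σ_{ℓ<n} λ_ℓ²`. Since `S_n → K` wherever the series converges (and `K = 0`
elsewhere), Fatou's lemma gives `∫∫ K² dμ⊗μ ≤ Σ_ℓ λ_ℓ²`; finally `f(x) g(y) ≤ C²` pointwise.
-/

open MeasureTheory Filter Finset

theorem sq_sum_tensor_eq {α ι : Type*} (e : ι → α → ℝ) (lam : ι → ℝ) (s : Finset ι) (z : α × α) :
    (∑ i ∈ s, lam i * e i z.1 * e i z.2) ^ 2 =
      ∑ i ∈ s, ∑ j ∈ s, lam i * lam j * ((e i z.1 * e j z.1) * (e i z.2 * e j z.2)) := by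
  rw [sq, sum_mul_sum]
  exact sum_congr rfl fun i _ => sum_congr rfl fun j _ => by ring

section Orthonormal

variable {α : Type*} [MeasurableSpace α] {μ : Measure α}

theorem memLp_two_of_integral_mul_self_ne_zero {u : α → ℝ} (hu : AEStronglyMeasurable u μ)
    (h : ∫ x, u x * u x ∂μ ≠ 0) : MemLp u 2 μ := by
  rw [memLp_two_iff_integrable_sq hu]
  simpa only [sq] using Integrable.of_integral_ne_zero h

theorem integrable_mul_of_integral_mul_self_ne_zero {u v : α → ℝ}
    (hu : AEStronglyMeasurable u μ) (hv : AEStronglyMeasurable v μ)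
    (hu' : ∫ x, u x * u x ∂μ ≠ 0) (hv' : ∫ x, v x * v x ∂μ ≠ 0) :
    Integrable (fun x => u x * v x) μ :=
  (memLp_two_of_integral_mul_self_ne_zero hu hu').integrable_mul
    (memLp_two_of_integral_mul_self_ne_zero hv hv')

variable {ι : Type*} {e : ι → α → ℝ} (hint : ∀ i j, Integrable (fun x => e i x * e j x) μ)
include hint

theorem integrable_sq_sum_tensor (lam : ι → ℝ) (s : Finset ι) :
    Integrable (fun z : α × α => (∑ i ∈ s, lam i * e i z.1 * e i z.2) ^ 2) (μ.prod μ) := by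
  simp only [sq_sum_tensor_eq e]
  exact integrable_finsetSum _ fun i _ => integrable_finsetSum _ fun j _ =>
    ((hint i j).mul_prod (hint i j)).const_mul _

theorem integral_sq_sum_tensor [SFinite μ] [DecidableEq ι]
    (horth : ∀ i j, ∫ x, e i x * e j x ∂μ = if i = j then 1 else 0)
    (lam : ι → ℝ) (s : Finset ι) :
    ∫ z : α × α, (∑ i ∈ s, lam i * e i z.1 * e i z.2) ^ 2 ∂(μ.prod μ) = ∑ i ∈ s, lam i ^ 2 := by
  have hterm : ∀ i j, ∫ z : α × α, lam i * lam j * ((e i z.1 * e j z.1) * (e i z.2 * e j z.2))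
      ∂(μ.prod μ) = if i = j then lam i ^ 2 else 0 := by
    intro i j
    rw [integral_const_mul, integral_prod_mul (f := fun x => e i x * e j x)
      (g := fun x => e i x * e j x), horth i j]
    split_ifs with hij <;> simp [hij, sq]
  simp only [sq_sum_tensor_eq e]
  rw [integral_finsetSum _ fun i _ => integrable_finsetSum _ fun j _ =>
    ((hint i j).mul_prod (hint i j)).const_mul _]
  refine sum_congr rfl fun i hi => ?_
  rw [integral_finsetSum _ fun j _ => ((hint i j).mul_prod (hint i j)).const_mul _]
  simp [hterm, hi]

end Orthonormal

section Fatou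

theorem ofReal_sq_tsum_le_liminf (F : ℕ → ℝ) :
    ENNReal.ofReal ((∑' i, F i) ^ 2) ≤
      liminf (fun n => ENNReal.ofReal ((∑ i ∈ range n, F i) ^ 2)) atTop := by
  by_cases hF : Summable F
  · have hlim : Tendsto (fun n => ENNReal.ofReal ((∑ i ∈ range n, F i) ^ 2)) atTop
        (nhds (ENNReal.ofReal ((∑' i, F i) ^ 2))) :=
      (ENNReal.continuous_ofReal.tendsto _).comp (hF.hasSum.tendsto_sum_nat.pow 2)
    exact hlim.liminf_eq.ge
  · rw [tsum_eq_zero_of_not_summable hF]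
    simp

variable {α : Type*} [MeasurableSpace α] {μ : Measure α}

theorem integrable_sq_tsum_and_integral_le {F : ℕ → α → ℝ} (hF : ∀ i, AEMeasurable (F i) μ)
    (hint : ∀ n, Integrable (fun x => (∑ i ∈ range n, F i x) ^ 2) μ) {B : ℝ}
    (hB : ∀ n, ∫ x, (∑ i ∈ range n, F i x) ^ 2 ∂μ ≤ B) :
    Integrable (fun x => (∑' i, F i x) ^ 2) μ ∧ ∫ x, (∑' i, F i x) ^ 2 ∂μ ≤ B := by
  have hmeas : AEStronglyMeasurable (fun x => (∑' i, F i x) ^ 2) μ :=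
    (by fun_prop : AEMeasurable (fun x => (∑' i, F i x) ^ 2) μ).aestronglyMeasurable
  have hnonneg : 0 ≤ᵐ[μ] fun x => (∑' i, F i x) ^ 2 := Eventually.of_forall fun x => sq_nonneg _
  have hlintegral : ∫⁻ x, ENNReal.ofReal ((∑' i, F i x) ^ 2) ∂μ ≤ ENNReal.ofReal B := calc
    _ ≤ ∫⁻ x, liminf (fun n => ENNReal.ofReal ((∑ i ∈ range n, F i x) ^ 2)) atTop ∂μ :=
      lintegral_mono fun x => ofReal_sq_tsum_le_liminf fun i => F i x
    _ ≤ liminf (fun n => ∫⁻ x, ENNReal.ofReal ((∑ i ∈ range n, F i x) ^ 2) ∂μ) atTop :=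
      lintegral_liminf_le' fun n => by fun_prop
    _ ≤ ENNReal.ofReal B := by
      refine liminf_le_of_le (by isBoundedDefault) fun b hb => ?_
      obtain ⟨n, hn⟩ := hb.exists
      rw [← ofReal_integral_eq_lintegral_ofReal (hint n)
        (Eventually.of_forall fun x => sq_nonneg _)] at hn
      exact hn.trans (ENNReal.ofReal_le_ofReal (hB n))
  have hB0 : 0 ≤ B := (integral_nonneg fun x => sq_nonneg _).trans (hB 0)
  refine ⟨⟨hmeas, (hasFiniteIntegral_iff_ofReal hnonneg).2
    (hlintegral.trans_lt ENNReal.ofReal_lt_top)⟩, ?_⟩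
  rw [integral_eq_lintegral_of_nonneg_ae hnonneg hmeas]
  exact ENNReal.toReal_le_of_le_ofReal hB0 hlintegral

end Fatou

theorem stmt_13_general {X : Type*} [MeasurableSpace X] (μ : Measure X) [IsProbabilityMeasure μ]
    (e : ℕ → X → ℝ) (he : ∀ ℓ, Measurable (e ℓ))
    (lam : ℕ → ℝ) (hl2 : Summable (fun ℓ => lam ℓ ^ 2))
    (horth : ∀ i j, ∫ x, e i x * e j x ∂μ = if i = j then 1 else 0)
    (K : X → X → ℝ) (hK : ∀ x y, K x y = ∑' ℓ, lam ℓ * e ℓ x * e ℓ y)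
    (C : ℝ) (f g : X → ℝ)
    (hf0 : ∀ x, 0 ≤ f x) (hg0 : ∀ x, 0 ≤ g x)
    (hfC : ∀ x, f x ≤ C) (hgC : ∀ x, g x ≤ C) :
    0 ≤ ∫ z : X × X, (K z.1 z.2) ^ 2 * f z.1 * g z.2 ∂(μ.prod μ) ∧
    ∫ z : X × X, (K z.1 z.2) ^ 2 * f z.1 * g z.2 ∂(μ.prod μ)
      ≤ C ^ 2 * ∑' ℓ, lam ℓ ^ 2 := by
  have hint : ∀ i j, Integrable (fun x => e i x * e j x) μ := fun i j =>
    integrable_mul_of_integral_mul_self_ne_zero (he i).aestronglyMeasurable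
      (he j).aestronglyMeasurable (by simp [horth]) (by simp [horth])
  obtain ⟨hK2int, hK2le⟩ := integrable_sq_tsum_and_integral_le
    (F := fun ℓ (z : X × X) => lam ℓ * e ℓ z.1 * e ℓ z.2) (μ := μ.prod μ)
    (fun ℓ => by fun_prop) (fun n => integrable_sq_sum_tensor hint lam _)
    (fun n => (integral_sq_sum_tensor hint horth lam _).trans_le
      (hl2.sum_le_tsum _ fun i _ => sq_nonneg _))
  simp only [← hK] at hK2int hK2le
  have hpt : ∀ z : X × X, K z.1 z.2 ^ 2 * f z.1 * g z.2 ≤ C ^ 2 * K z.1 z.2 ^ 2 := fun z => by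
    have hfg : f z.1 * g z.2 ≤ C ^ 2 :=
      sq C ▸ mul_le_mul (hfC _) (hgC _) (hg0 _) ((hf0 z.1).trans (hfC z.1))
    nlinarith [sq_nonneg (K z.1 z.2)]
  have hnonneg : ∀ z : X × X, 0 ≤ K z.1 z.2 ^ 2 * f z.1 * g z.2 := fun z =>
    mul_nonneg (mul_nonneg (sq_nonneg _) (hf0 _)) (hg0 _)
  refine ⟨integral_nonneg hnonneg, ?_⟩
  calc ∫ z : X × X, K z.1 z.2 ^ 2 * f z.1 * g z.2 ∂(μ.prod μ)
      ≤ ∫ z : X × X, C ^ 2 * K z.1 z.2 ^ 2 ∂(μ.prod μ) :=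
        integral_mono_of_nonneg (Eventually.of_forall hnonneg) (hK2int.const_mul _)
          (Eventually.of_forall hpt)
    _ = C ^ 2 * ∫ z : X × X, K z.1 z.2 ^ 2 ∂(μ.prod μ) := integral_const_mul _ _
    _ ≤ C ^ 2 * ∑' ℓ, lam ℓ ^ 2 := mul_le_mul_of_nonneg_left hK2le (sq_nonneg C)

/-- For a kernel `K(x,y) = Σ_ℓ λ_ℓ e_ℓ(x)e_ℓ(y)` with `(e_ℓ)` orthonormal in `L²(μ)`
and `λ ∈ ℓ²`, and probability densities `f, g ≤ C` w.r.t. `μ`,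
`0 ≤ E[K(X,Y)²] ≤ C² Σ_ℓ λ_ℓ²` where `X ∼ f dμ`, `Y ∼ g dμ` independent. -/
theorem stmt_13 {X : Type*} [MeasurableSpace X] (μ : Measure X) [IsProbabilityMeasure μ]
    (e : ℕ → X → ℝ) (he : ∀ ℓ, Measurable (e ℓ))
    (lam : ℕ → ℝ) (hlam : ∀ ℓ, 0 ≤ lam ℓ) (hl2 : Summable (fun ℓ => lam ℓ ^ 2))
    (horth : ∀ i j, ∫ x, e i x * e j x ∂μ = if i = j then 1 else 0)
    (K : X → X → ℝ) (hK : ∀ x y, K x y = ∑' ℓ, lam ℓ * e ℓ x * e ℓ y)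
    -- the kernel series is square-integrably dominated on the product space
    (hdom : MemLp (fun z : X × X => ∑' ℓ, lam ℓ * |e ℓ z.1| * |e ℓ z.2|) 2 (μ.prod μ))
    (C : ℝ) (f g : X → ℝ) (hfm : Measurable f) (hgm : Measurable g)
    (hf0 : ∀ x, 0 ≤ f x) (hg0 : ∀ x, 0 ≤ g x)
    (hfC : ∀ x, f x ≤ C) (hgC : ∀ x, g x ≤ C)
    (hf1 : ∫ x, f x ∂μ = 1) (hg1 : ∫ x, g x ∂μ = 1) :
    0 ≤ ∫ z : X × X, (K z.1 z.2) ^ 2 * f z.1 * g z.2 ∂(μ.prod μ) ∧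
    ∫ z : X × X, (K z.1 z.2) ^ 2 * f z.1 * g z.2 ∂(μ.prod μ)
      ≤ C ^ 2 * ∑' ℓ, lam ℓ ^ 2 :=
  stmt_13_general μ e he lam hl2 horth K hK C f g hf0 hg0 hfC hgC
end
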